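/- (Substitution step in the proof of Lemma 5.2.) Let s = r + iω with r, ω ∈ ℝ, and let x : [0,1] → ℂⁿ be such that w := H·x is continuously differentiable and s·x(ζ) = P₁ w′(ζ) + G₀ w(ζ) for all ζ ∈ [0,1]. Then the function y(ζ) := Φ_ω(ζ)·S^{−*}(ζ)·w(ζ) is continuously differentiable and satisfies y′(ζ) = (r·Δ(ζ)⁻¹ + Q_ω(ζ))·y(ζ) for all ζ ∈ [0,1]. -/

import Mathlib

/-!
As `Δ` is Hermitian (its inverse is real diagonal), conjugating `P₁H = S⁻¹ΔS` gives
`HP₁ = S*ΔS^{−*}`, i.e. `S^{−*}P₁⁻¹ = Δ⁻¹S^{−*}H`. Multiplying the ODE by `S^{−*}P₁⁻¹` therefore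
turns it into `u′ = (sΔ⁻¹ + Q)u` for `u := S^{−*}w`. The diagonal gauge `Φ_ω` commutes with `Δ⁻¹`
and satisfies `Φ_ω′ = −iωΔ⁻¹Φ_ω`, so passing to `y = Φ_ω u` shifts `s = r + iω` to `r` and
conjugates `Q` into `Q_ω`.
-/

open Matrix Set intervalIntegral
open scoped ComplexOrder

namespace Matrix

variable {n R : Type*} [Fintype n] [DecidableEq n] [CommRing R]

theorem conjTranspose_inv_mul_inv_eq_of_mul_eq [StarRing R] {P H S D : Matrix n n R}
    (hP : P.IsHermitian) (hH : H.IsHermitian) (hD : D.IsHermitian)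
    (hPu : IsUnit P.det) (hSu : IsUnit S.det) (hDu : IsUnit D.det)
    (h : P * H = S⁻¹ * D * S) : (Sᴴ)⁻¹ * P⁻¹ = D⁻¹ * (Sᴴ)⁻¹ * H := by
  have hShu : IsUnit Sᴴ.det := by rw [det_conjTranspose]; exact hSu.star
  have hHP : H * P = Sᴴ * D * (Sᴴ)⁻¹ := by
    simpa [conjTranspose_mul, hP.eq, hH.eq, hD.eq, conjTranspose_nonsing_inv, Matrix.mul_assoc]
      using congrArg conjTranspose h
  calc (Sᴴ)⁻¹ * P⁻¹ = D⁻¹ * ((Sᴴ)⁻¹ * (Sᴴ * D * (Sᴴ)⁻¹)) * P⁻¹ := by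
        rw [Matrix.mul_assoc Sᴴ, nonsing_inv_mul_cancel_left _ _ hShu, ← Matrix.mul_assoc,
          nonsing_inv_mul _ hDu, Matrix.one_mul]
    _ = D⁻¹ * (Sᴴ)⁻¹ * H := by
        rw [← hHP, ← Matrix.mul_assoc, ← Matrix.mul_assoc, mul_nonsing_inv_cancel_right _ _ hPu]

theorem add_inv_mulVec_eq_of_ode {M P D H G T' : Matrix n n R} {x w w' : n → R} {σ : R}
    (hM : IsUnit M.det) (hP : IsUnit P.det) (hkey : M⁻¹ * P⁻¹ = D * M⁻¹ * H)
    (hw : w = H *ᵥ x) (hode : σ • x = P *ᵥ w' + G *ᵥ w) :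
    T' *ᵥ w + M⁻¹ *ᵥ w' = (σ • D + (-(D * M⁻¹ * H * G * M) + T' * M)) *ᵥ (M⁻¹ *ᵥ w) := by
  have hMw : M *ᵥ (M⁻¹ *ᵥ w) = w := by rw [mulVec_mulVec, mul_nonsing_inv _ hM, one_mulVec]
  have hw' : M⁻¹ *ᵥ w' = (M⁻¹ * P⁻¹) *ᵥ (σ • x - G *ᵥ w) := by
    rw [hode, add_sub_cancel_right, mulVec_mulVec, Matrix.mul_assoc, nonsing_inv_mul _ hP,
      Matrix.mul_one]
  rw [hw', hkey]
  simp only [add_mulVec, neg_mulVec, smul_mulVec, mulVec_sub, mulVec_smul, ← mulVec_mulVec, hMw,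
    ← hw]
  abel

theorem gauge_mulVec_eq {Φ D Q : Matrix n n R} {u u' : n → R} {c σ : R}
    (hΦ : IsUnit Φ.det) (hcomm : D * Φ = Φ * D) (hu' : u' = (σ • D + Q) *ᵥ u) :
    (c • D * Φ) *ᵥ u + Φ *ᵥ u' = ((c + σ) • D + Φ * Q * Φ⁻¹) *ᵥ (Φ *ᵥ u) := by
  have hΦu : Φ⁻¹ *ᵥ (Φ *ᵥ u) = u := by rw [mulVec_mulVec, nonsing_inv_mul _ hΦ, one_mulVec]
  have hDΦ : D *ᵥ (Φ *ᵥ u) = Φ *ᵥ (D *ᵥ u) := by rw [mulVec_mulVec, hcomm, ← mulVec_mulVec]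
  simp only [hu', add_mulVec, smul_mulVec, mulVec_add, mulVec_smul, add_smul, smul_mul_assoc,
    ← mulVec_mulVec, hΦu, hDΦ]
  abel

end Matrix

section Calculus

variable {𝕜 𝔸 m n : Type*} [NontriviallyNormedField 𝕜] [NormedCommRing 𝔸] [NormedAlgebra 𝕜 𝔸]
  {s : Set 𝕜} {t : 𝕜}

theorem HasDerivWithinAt.matrix_mulVec [Fintype m] [Fintype n] {A : 𝕜 → Matrix m n 𝔸}
    {A' : Matrix m n 𝔸} {v : 𝕜 → n → 𝔸} {v' : n → 𝔸}
    (hA : ∀ i j, HasDerivWithinAt (fun t => A t i j) (A' i j) s t)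
    (hv : HasDerivWithinAt v v' s t) :
    HasDerivWithinAt (fun t => A t *ᵥ v t) (A' *ᵥ v t + A t *ᵥ v') s t := by
  refine hasDerivWithinAt_pi.2 fun i => ?_
  simpa only [mulVec, dotProduct, Pi.add_apply, ← Finset.sum_add_distrib] using
    HasDerivWithinAt.fun_sum fun j _ => (hA i j).fun_mul (hasDerivWithinAt_pi.1 hv j)

theorem hasDerivWithinAt_diagonal_apply [DecidableEq n] {d : 𝕜 → n → 𝔸} {d' : n → 𝔸}
    (hd : ∀ k, HasDerivWithinAt (fun t => d t k) (d' k) s t) (i j : n) :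
    HasDerivWithinAt (fun t => diagonal (d t) i j) (diagonal d' i j) s t := by
  rcases eq_or_ne i j with rfl | hij
  · simpa only [diagonal_apply_eq] using hd i
  · simpa only [diagonal_apply_ne _ hij] using hasDerivWithinAt_const t s (0 : 𝔸)

end Calculus

theorem ContinuousOn.hasDerivWithinAt_integral_Icc {E : Type*} [NormedAddCommGroup E]
    [NormedSpace ℝ E] [CompleteSpace E] {f : ℝ → E} {a b x : ℝ}
    (hf : ContinuousOn f (Icc a b)) (hx : x ∈ Icc a b) :
    HasDerivWithinAt (fun u => ∫ τ in a..u, f τ) (f x) (Icc a b) x := by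
  have : Fact (x ∈ Icc a b) := ⟨hx⟩
  exact integral_hasDerivWithinAt_right
    ((hf.mono (uIcc_subset_Icc (left_mem_Icc.2 (hx.1.trans hx.2)) hx)).intervalIntegrable)
    (hf.stronglyMeasurableAtFilter_nhdsWithin measurableSet_Icc x) (hf x hx)

theorem hasDerivWithinAt_cexp_mul_integral {f : ℝ → ℝ} {a b x : ℝ}
    (hf : ContinuousOn f (Icc a b)) (hx : x ∈ Icc a b) (c : ℂ) :
    HasDerivWithinAt (fun t => Complex.exp (c * ↑(∫ τ in a..t, f τ)))
      (c * f x * Complex.exp (c * ↑(∫ τ in a..x, f τ))) (Icc a b) x := by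
  have h := ((hf.hasDerivWithinAt_integral_Icc hx).ofReal_comp.const_mul c).cexp
  rwa [mul_comm] at h

theorem hasDerivWithinAt_diagonal_cexp_integral {ι : Type*} [Fintype ι] [DecidableEq ι]
    {f : ι → ℝ → ℝ} {a b x : ℝ} (hf : ∀ k, ContinuousOn (f k) (Icc a b)) (hx : x ∈ Icc a b)
    (c : ℂ) (i j : ι) :
    HasDerivWithinAt (fun t => diagonal (fun k => Complex.exp (c * ↑(∫ τ in a..t, f k τ))) i j)
      ((c • diagonal (fun k => (f k x : ℂ)) *
        diagonal (fun k => Complex.exp (c * ↑(∫ τ in a..x, f k τ)))) i j) (Icc a b) x := by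
  rw [← diagonal_smul, diagonal_mul_diagonal]
  refine hasDerivWithinAt_diagonal_apply (fun k => ?_) i j
  simpa only [Pi.smul_apply, smul_eq_mul] using hasDerivWithinAt_cexp_mul_integral (hf k) hx c

theorem continuousOn_matrix {X m n R : Type*} [TopologicalSpace X] [TopologicalSpace R]
    {A : X → Matrix m n R} {s : Set X} (hA : ∀ i j, ContinuousOn (fun x => A x i j) s) :
    ContinuousOn A s :=
  continuousOn_pi.2 fun i => continuousOn_pi.2 (hA i)

theorem continuousOn_matrix_of_hasDerivWithinAt {m n F : Type*} [NormedAddCommGroup F]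
    [NormedSpace ℝ F] {A A' : ℝ → Matrix m n F} {s : Set ℝ}
    (h : ∀ i j, ∀ t ∈ s, HasDerivWithinAt (fun t => A t i j) (A' t i j) s t) :
    ContinuousOn A s :=
  continuousOn_matrix fun i j t ht => (h i j t ht).continuousWithinAt

theorem ContinuousOn.matrix_inv {X n K : Type*} [TopologicalSpace X] [Fintype n] [DecidableEq n]
    [Field K] [TopologicalSpace K] [IsTopologicalDivisionRing K]
    {A : X → Matrix n n K} {s : Set X} (hA : ContinuousOn A s) (hdet : ∀ x ∈ s, (A x).det ≠ 0) :
    ContinuousOn (fun x => (A x)⁻¹) s := by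
  intro x hx
  have hinv : ContinuousAt Ring.inverse (A x).det := by
    simpa only [Ring.inverse_eq_inv'] using continuousAt_inv₀ (hdet x hx)
  exact (continuousAt_matrix_inv _ hinv).comp_continuousWithinAt (hA x hx)

theorem substitution_step_general
    (n : ℕ)
    (P₁ : Matrix (Fin n) (Fin n) ℂ) (hP₁herm : P₁.IsHermitian) (hP₁inv : IsUnit P₁)
    (G₀ : Matrix (Fin n) (Fin n) ℂ)
    (H : ℝ → Matrix (Fin n) (Fin n) ℂ)
    (hHcont : ∀ i j, ContinuousOn (fun ζ => H ζ i j) (Set.Icc 0 1))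
    (hHherm : ∀ ζ ∈ Set.Icc (0 : ℝ) 1, (H ζ).IsHermitian)
    -- the diagonalization `P₁H(ζ) = S(ζ)⁻¹ Δ(ζ) S(ζ)` with `S, S⁻¹, Δ` continuously
    -- differentiable and `Δ(ζ)` diagonal with real entries
    (S Δ S' Δ' : ℝ → Matrix (Fin n) (Fin n) ℂ)
    (hS' : ∀ i j, ∀ ζ ∈ Set.Icc (0 : ℝ) 1,
      HasDerivWithinAt (fun ξ => S ξ i j) (S' ζ i j) (Set.Icc 0 1) ζ)
    (hΔ' : ∀ i j, ∀ ζ ∈ Set.Icc (0 : ℝ) 1,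
      HasDerivWithinAt (fun ξ => Δ ξ i j) (Δ' ζ i j) (Set.Icc 0 1) ζ)
    (hSunit : ∀ ζ ∈ Set.Icc (0 : ℝ) 1, IsUnit (S ζ))
    (hΔunit : ∀ ζ ∈ Set.Icc (0 : ℝ) 1, IsUnit (Δ ζ))
    (α : Fin n → ℝ → ℝ)
    (hΔinv : ∀ ζ ∈ Set.Icc (0 : ℝ) 1,
      (Δ ζ)⁻¹ = Matrix.diagonal (fun k => ((α k ζ : ℝ) : ℂ)))
    (hdiagz : ∀ ζ ∈ Set.Icc (0 : ℝ) 1, P₁ * H ζ = (S ζ)⁻¹ * Δ ζ * S ζ)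
    -- `S^{−*}` is continuously differentiable with derivative `Sstarinv'`
    (Sstarinv' : ℝ → Matrix (Fin n) (Fin n) ℂ)
    (hSstarinv' : ∀ i j, ∀ ζ ∈ Set.Icc (0 : ℝ) 1,
      HasDerivWithinAt (fun ξ => ((S ξ)ᴴ)⁻¹ i j) (Sstarinv' ζ i j) (Set.Icc 0 1) ζ)
    (hSstarinv'cont : ∀ i j, ContinuousOn (fun ζ => Sstarinv' ζ i j) (Set.Icc 0 1))
    -- `Φ_ω`, `Q` and `Q_ω`
    (r ω : ℝ)
    (Φω Q Qω : ℝ → Matrix (Fin n) (Fin n) ℂ)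
    (hΦω : ∀ ζ, Φω ζ = Matrix.diagonal
      (fun k => Complex.exp (-(Complex.I * (ω : ℂ) * ((∫ τ in (0 : ℝ)..ζ, α k τ : ℝ) : ℂ)))))
    (hQ : ∀ ζ, Q ζ = -((Δ ζ)⁻¹ * ((S ζ)ᴴ)⁻¹ * H ζ * G₀ * (S ζ)ᴴ) + Sstarinv' ζ * (S ζ)ᴴ)
    (hQω : ∀ ζ, Qω ζ = Φω ζ * Q ζ * (Φω ζ)⁻¹)
    -- the solution `x` with `w := H·x` continuously differentiable solving the ODE
    (x w w' : ℝ → Fin n → ℂ)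
    (hw : ∀ ζ ∈ Set.Icc (0 : ℝ) 1, w ζ = (H ζ) *ᵥ x ζ)
    (hw' : ∀ ζ ∈ Set.Icc (0 : ℝ) 1, HasDerivWithinAt w (w' ζ) (Set.Icc 0 1) ζ)
    (hode : ∀ ζ ∈ Set.Icc (0 : ℝ) 1,
      ((r : ℂ) + (ω : ℂ) * Complex.I) • x ζ = P₁ *ᵥ w' ζ + G₀ *ᵥ w ζ)
    -- the substituted function `y = Φ_ω · S^{−*} · w`
    (y : ℝ → Fin n → ℂ)
    (hy : ∀ ζ, y ζ = (Φω ζ * ((S ζ)ᴴ)⁻¹) *ᵥ w ζ) :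
    (∀ ζ ∈ Set.Icc (0 : ℝ) 1,
      HasDerivWithinAt y (((r : ℂ) • (Δ ζ)⁻¹ + Qω ζ) *ᵥ y ζ) (Set.Icc 0 1) ζ) ∧
    ContinuousOn (fun ζ => ((r : ℂ) • (Δ ζ)⁻¹ + Qω ζ) *ᵥ y ζ) (Set.Icc 0 1) := by
  have hP₁det := P₁.isUnit_iff_isUnit_det.1 hP₁inv
  have hΔdet ζ (hζ : ζ ∈ Icc (0 : ℝ) 1) : IsUnit (Δ ζ).det :=
    (Δ ζ).isUnit_iff_isUnit_det.1 (hΔunit ζ hζ)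
  have hΔherm ζ (hζ : ζ ∈ Icc (0 : ℝ) 1) : (Δ ζ).IsHermitian := by
    have h : (Δ ζ)⁻¹.IsHermitian := hΔinv ζ hζ ▸
      isHermitian_diagonal_of_self_adjoint _ (funext fun k => Complex.conj_ofReal _)
    simpa only [nonsing_inv_nonsing_inv _ (hΔdet ζ hζ)] using h.inv
  have hΔinvcont : ContinuousOn (fun ζ => (Δ ζ)⁻¹) (Icc 0 1) :=
    (continuousOn_matrix_of_hasDerivWithinAt hΔ').matrix_inv fun ζ hζ => (hΔdet ζ hζ).ne_zero
  have hαcont k : ContinuousOn (α k) (Icc 0 1) :=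
    (Complex.continuous_re.comp_continuousOn
      (continuousOn_pi.1 (continuousOn_pi.1 hΔinvcont k) k)).congr fun ζ hζ => by
        simp [hΔinv ζ hζ]
  have hΦ' : ∀ i j, ∀ ζ ∈ Icc (0 : ℝ) 1, HasDerivWithinAt (fun t => Φω t i j)
      (((-(Complex.I * ω)) • (Δ ζ)⁻¹ * Φω ζ) i j) (Icc 0 1) ζ := fun i j ζ hζ => by
    simp only [hΦω, hΔinv ζ hζ, ← neg_mul]
    exact hasDerivWithinAt_diagonal_cexp_integral hαcont hζ _ i j
  have hΦdet ζ : IsUnit (Φω ζ).det := by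
    rw [hΦω, det_diagonal]
    exact isUnit_iff_ne_zero.2 (Finset.prod_ne_zero_iff.2 fun k _ => Complex.exp_ne_zero _)
  have hu ζ (hζ : ζ ∈ Icc (0 : ℝ) 1) : HasDerivWithinAt (fun t => ((S t)ᴴ)⁻¹ *ᵥ w t)
      ((((r : ℂ) + ω * Complex.I) • (Δ ζ)⁻¹ + Q ζ) *ᵥ (((S ζ)ᴴ)⁻¹ *ᵥ w ζ)) (Icc 0 1) ζ := by
    have hSdet := (S ζ).isUnit_iff_isUnit_det.1 (hSunit ζ hζ)
    have hkey := conjTranspose_inv_mul_inv_eq_of_mul_eq hP₁herm (hHherm ζ hζ) (hΔherm ζ hζ)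
      hP₁det hSdet (hΔdet ζ hζ) (hdiagz ζ hζ)
    rw [hQ, ← add_inv_mulVec_eq_of_ode (by simpa only [det_conjTranspose] using hSdet.star)
      hP₁det hkey (hw ζ hζ) (hode ζ hζ)]
    exact HasDerivWithinAt.matrix_mulVec (fun i j => hSstarinv' i j ζ hζ) (hw' ζ hζ)
  have hyu : y = fun t => Φω t *ᵥ (((S t)ᴴ)⁻¹ *ᵥ w t) :=
    funext fun t => by rw [hy, mulVec_mulVec]
  refine ⟨fun ζ hζ => ?_, ?_⟩
  · have hcomm : (Δ ζ)⁻¹ * Φω ζ = Φω ζ * (Δ ζ)⁻¹ := by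
      rw [hΔinv ζ hζ, hΦω]
      exact commute_diagonal _ _
    have hy' := HasDerivWithinAt.matrix_mulVec (hΦ' · · ζ hζ) (hu ζ hζ)
    rw [gauge_mulVec_eq (hΦdet ζ) hcomm rfl, ← hQω,
      show -(Complex.I * ω) + (r + ω * Complex.I) = (r : ℂ) by ring, ← hyu] at hy'
    rwa [hy, ← mulVec_mulVec]
  · have hScont := continuousOn_matrix_of_hasDerivWithinAt hS'
    have hSinvcont : ContinuousOn (fun ζ => ((S ζ)ᴴ)⁻¹) (Icc 0 1) :=
      continuousOn_matrix_of_hasDerivWithinAt hSstarinv'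
    have hΦcont := continuousOn_matrix_of_hasDerivWithinAt hΦ'
    have hΦinvcont := hΦcont.matrix_inv fun ζ _ => (hΦdet ζ).ne_zero
    have hwcont : ContinuousOn w (Icc 0 1) := fun ζ hζ => (hw' ζ hζ).continuousWithinAt
    have hHcont := continuousOn_matrix hHcont
    have hSstarinv'cont := continuousOn_matrix hSstarinv'cont
    simp only [hQω, hQ, hy]
    fun_prop

/-- Substitution step in the proof of Lemma 5.2: if `s = r + iω` and `w := H·x`
is continuously differentiable with `s·x(ζ) = P₁ w′(ζ) + G₀ w(ζ)` on `[0,1]`, then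
`y(ζ) := Φ_ω(ζ)·S^{−*}(ζ)·w(ζ)` is continuously differentiable with
`y′(ζ) = (r·Δ(ζ)⁻¹ + Q_ω(ζ))·y(ζ)` on `[0,1]`, where
`Φ_ω(ζ) = diag(exp(−iω∫₀^ζ αₖ))` (with `Δ⁻¹ = diag(α₁,…,αₙ)`), `S^{−*} = (S*)⁻¹`,
`Q = −Δ⁻¹·S^{−*}·H·G₀·S* + (d/dζ S^{−*})·S*` and `Q_ω = Φ_ω·Q·Φ_ω⁻¹`. -/
theorem substitution_step
    (n : ℕ) (hn : 0 < n)
    (P₁ : Matrix (Fin n) (Fin n) ℂ) (hP₁herm : P₁.IsHermitian) (hP₁inv : IsUnit P₁)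
    (G₀ : Matrix (Fin n) (Fin n) ℂ)
    (H : ℝ → Matrix (Fin n) (Fin n) ℂ)
    (hHcont : ∀ i j, ContinuousOn (fun ζ => H ζ i j) (Set.Icc 0 1))
    (hHherm : ∀ ζ ∈ Set.Icc (0 : ℝ) 1, (H ζ).IsHermitian)
    (hHpos : ∀ ζ ∈ Set.Icc (0 : ℝ) 1, (H ζ).PosDef)
    -- the diagonalization `P₁H(ζ) = S(ζ)⁻¹ Δ(ζ) S(ζ)` with `S, S⁻¹, Δ` continuously
    -- differentiable and `Δ(ζ)` diagonal with real entries
    (S Δ S' Δ' : ℝ → Matrix (Fin n) (Fin n) ℂ)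
    (hS' : ∀ i j, ∀ ζ ∈ Set.Icc (0 : ℝ) 1,
      HasDerivWithinAt (fun ξ => S ξ i j) (S' ζ i j) (Set.Icc 0 1) ζ)
    (hS'cont : ∀ i j, ContinuousOn (fun ζ => S' ζ i j) (Set.Icc 0 1))
    (hΔ' : ∀ i j, ∀ ζ ∈ Set.Icc (0 : ℝ) 1,
      HasDerivWithinAt (fun ξ => Δ ξ i j) (Δ' ζ i j) (Set.Icc 0 1) ζ)
    (hΔ'cont : ∀ i j, ContinuousOn (fun ζ => Δ' ζ i j) (Set.Icc 0 1))
    (hSunit : ∀ ζ ∈ Set.Icc (0 : ℝ) 1, IsUnit (S ζ))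
    (hΔunit : ∀ ζ ∈ Set.Icc (0 : ℝ) 1, IsUnit (Δ ζ))
    (α : Fin n → ℝ → ℝ)
    (hΔinv : ∀ ζ ∈ Set.Icc (0 : ℝ) 1,
      (Δ ζ)⁻¹ = Matrix.diagonal (fun k => ((α k ζ : ℝ) : ℂ)))
    (hdiagz : ∀ ζ ∈ Set.Icc (0 : ℝ) 1, P₁ * H ζ = (S ζ)⁻¹ * Δ ζ * S ζ)
    -- `S^{−*}` is continuously differentiable with derivative `Sstarinv'`
    (Sstarinv' : ℝ → Matrix (Fin n) (Fin n) ℂ)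
    (hSstarinv' : ∀ i j, ∀ ζ ∈ Set.Icc (0 : ℝ) 1,
      HasDerivWithinAt (fun ξ => ((S ξ)ᴴ)⁻¹ i j) (Sstarinv' ζ i j) (Set.Icc 0 1) ζ)
    (hSstarinv'cont : ∀ i j, ContinuousOn (fun ζ => Sstarinv' ζ i j) (Set.Icc 0 1))
    -- `Φ_ω`, `Q` and `Q_ω`
    (r ω : ℝ)
    (Φω Q Qω : ℝ → Matrix (Fin n) (Fin n) ℂ)
    (hΦω : ∀ ζ, Φω ζ = Matrix.diagonal
      (fun k => Complex.exp (-(Complex.I * (ω : ℂ) * ((∫ τ in (0 : ℝ)..ζ, α k τ : ℝ) : ℂ)))))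
    (hQ : ∀ ζ, Q ζ = -((Δ ζ)⁻¹ * ((S ζ)ᴴ)⁻¹ * H ζ * G₀ * (S ζ)ᴴ) + Sstarinv' ζ * (S ζ)ᴴ)
    (hQω : ∀ ζ, Qω ζ = Φω ζ * Q ζ * (Φω ζ)⁻¹)
    -- the solution `x` with `w := H·x` continuously differentiable solving the ODE
    (x w w' : ℝ → Fin n → ℂ)
    (hw : ∀ ζ ∈ Set.Icc (0 : ℝ) 1, w ζ = (H ζ) *ᵥ x ζ)
    (hw' : ∀ ζ ∈ Set.Icc (0 : ℝ) 1, HasDerivWithinAt w (w' ζ) (Set.Icc 0 1) ζ)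
    (hw'cont : ContinuousOn w' (Set.Icc 0 1))
    (hode : ∀ ζ ∈ Set.Icc (0 : ℝ) 1,
      ((r : ℂ) + (ω : ℂ) * Complex.I) • x ζ = P₁ *ᵥ w' ζ + G₀ *ᵥ w ζ)
    -- the substituted function `y = Φ_ω · S^{−*} · w`
    (y : ℝ → Fin n → ℂ)
    (hy : ∀ ζ, y ζ = (Φω ζ * ((S ζ)ᴴ)⁻¹) *ᵥ w ζ) :
    (∀ ζ ∈ Set.Icc (0 : ℝ) 1,
      HasDerivWithinAt y (((r : ℂ) • (Δ ζ)⁻¹ + Qω ζ) *ᵥ y ζ) (Set.Icc 0 1) ζ) ∧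
    ContinuousOn (fun ζ => ((r : ℂ) • (Δ ζ)⁻¹ + Qω ζ) *ᵥ y ζ) (Set.Icc 0 1) :=
  substitution_step_general n P₁ hP₁herm hP₁inv G₀ H hHcont hHherm S Δ S' Δ' hS' hΔ' hSunit hΔunit α
    hΔinv hdiagz Sstarinv' hSstarinv' hSstarinv'cont r ω Φω Q Qω hΦω hQ hQω x w w' hw hw' hode y hy
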